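/- arXiv:2202.12982 — 3 statements merged into one kernel-verified Lean document; each statement's English description precedes it below -/
import Mathlib

section
/- If Ann(A) = 0 and A_1 = Σ_{g∈Λ_G∩Σ_G} ρ(L_{g^{-1}})(A_g) + Σ_{g∈Λ_G} A_{g^{-1}} A_g, then A = ⊕_{[g]∈Λ_G/≈} 𝒜_{[g]} is the direct sum of the graded ideals 𝒜_{[g]}, with 𝒜_{[g]}·𝒜_{[h]} = 0 for [g] ≠ [h]. -/
open Submodule

section
variable {G : Type*} [CommGroup G]

/-- A chain connection: a nonempty list `c` starting at `g`, with all entries in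
`Main ∪ Other`, all proper partial products in `Main`, and total product `g'` or `g'⁻¹`. -/
def ChainConnected (Main Other : Set G) (g g' : G) : Prop :=
  ∃ c : List G, c ≠ [] ∧ c.head? = some g ∧
    (∀ k ∈ c, k ∈ Main ∪ Other) ∧
    (∀ i : ℕ, 0 < i → i < c.length → (c.take i).prod ∈ Main) ∧
    (c.prod = g' ∨ c.prod = g'⁻¹)

end

/-- A `G`-graded Lie-Rinehart algebra `(L, A)` over a field `F`. -/
structure GradedLieRinehart (F : Type*) [Field F] (G : Type*) [CommGroup G] [DecidableEq G]
    (A : Type*) [CommRing A] [Algebra F A]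
    (L : Type*) [LieRing L] [LieAlgebra F L] [Module A L] [IsScalarTower F A L] where
  ρ : L →ₗ[F] Derivation F A A
  ρ_smul : ∀ (a : A) (v : L) (b : A), ρ (a • v) b = a * ρ v b
  ρ_bracket : ∀ v w : L, ρ ⁅v, w⁆ = ⁅ρ v, ρ w⁆
  leibniz : ∀ (v w : L) (a : A), ⁅v, a • w⁆ = a • ⁅v, w⁆ + (ρ v a) • w
  𝓛 : G → Submodule F L
  𝓐 : G → Submodule F A
  internalL : DirectSum.IsInternal 𝓛
  internalA : DirectSum.IsInternal 𝓐
  bracket_mem : ∀ {g h : G} {v w : L}, v ∈ 𝓛 g → w ∈ 𝓛 h → ⁅v, w⁆ ∈ 𝓛 (g * h)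
  mul_mem : ∀ {g h : G} {a b : A}, a ∈ 𝓐 g → b ∈ 𝓐 h → a * b ∈ 𝓐 (g * h)
  smul_mem : ∀ {h g : G} {a : A} {v : L}, a ∈ 𝓐 h → v ∈ 𝓛 g → a • v ∈ 𝓛 (h * g)
  rho_mem : ∀ {g h : G} {v : L} {a : A}, v ∈ 𝓛 g → a ∈ 𝓐 h → ρ v a ∈ 𝓐 (g * h)

namespace GradedLieRinehart

variable {F : Type*} [Field F] {G : Type*} [CommGroup G] [DecidableEq G]
  {A : Type*} [CommRing A] [Algebra F A]
  {L : Type*} [LieRing L] [LieAlgebra F L] [Module A L] [IsScalarTower F A L]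
variable (𝔏 : GradedLieRinehart F G A L)

/-- The support `Σ_G` of the grading of `L`. -/
def SuppL : Set G := {g | g ≠ 1 ∧ 𝔏.𝓛 g ≠ ⊥}

/-- The support `Λ_G` of the grading of `A`. -/
def SuppA : Set G := {g | g ≠ 1 ∧ 𝔏.𝓐 g ≠ ⊥}

/-- `Σ_G^± = Σ_G ∪ Σ_G⁻¹`. -/
def Spm : Set G := {g | g ∈ 𝔏.SuppL ∨ g⁻¹ ∈ 𝔏.SuppL}

/-- `Λ_G^± = Λ_G ∪ Λ_G⁻¹`. -/
def Lpm : Set G := {g | g ∈ 𝔏.SuppA ∨ g⁻¹ ∈ 𝔏.SuppA}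

/-- `g` is `Σ_G`-connected to `g'`. -/
def SigmaConnected (g g' : G) : Prop := ChainConnected 𝔏.Spm 𝔏.Lpm g g'

/-- `g` is `Λ_G`-connected to `g'`. -/
def LambdaConnected (g g' : G) : Prop := ChainConnected (𝔏.Lpm ∪ 𝔏.Spm) (∅ : Set G) g g'

/-- The span of products `A_h • L_g`. -/
def smulSub (h g : G) : Submodule F L :=
  Submodule.span F {x | ∃ a ∈ 𝔏.𝓐 h, ∃ v ∈ 𝔏.𝓛 g, x = a • v}

/-- The span of brackets `[L_h, L_g]`. -/
def bracketSub (h g : G) : Submodule F L :=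
  Submodule.span F {x | ∃ v ∈ 𝔏.𝓛 h, ∃ w ∈ 𝔏.𝓛 g, x = ⁅v, w⁆}

/-- `L_{[g],1}`. -/
def L1class (g : G) : Submodule F L :=
  (⨆ g' ∈ {g' | g' ∈ 𝔏.SuppL ∧ 𝔏.SigmaConnected g g' ∧ g' ∈ 𝔏.SuppA}, 𝔏.smulSub g'⁻¹ g') ⊔
  (⨆ g' ∈ {g' | g' ∈ 𝔏.SuppL ∧ 𝔏.SigmaConnected g g'}, 𝔏.bracketSub g'⁻¹ g')

/-- `V_{[g]}`. -/
def Vclass (g : G) : Submodule F L :=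
  ⨆ g' ∈ {g' | g' ∈ 𝔏.SuppL ∧ 𝔏.SigmaConnected g g'}, 𝔏.𝓛 g'

/-- The ideal `I_{[g]} = L_{[g],1} ⊕ V_{[g]}` attached to the class of `g`. -/
def Iclass (g : G) : Submodule F L := 𝔏.L1class g ⊔ 𝔏.Vclass g

/-- `Σ_{g ∈ Σ_G ∩ Λ_G} A_{g⁻¹} L_g + Σ_{g ∈ Σ_G} [L_{g⁻¹}, L_g]`. -/
def L1full : Submodule F L :=
  (⨆ g ∈ 𝔏.SuppL ∩ 𝔏.SuppA, 𝔏.smulSub g⁻¹ g) ⊔ (⨆ g ∈ 𝔏.SuppL, 𝔏.bracketSub g⁻¹ g)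

/-- An ideal of the Lie-Rinehart algebra `(L,A)`: a Lie ideal which is an `A`-submodule
and satisfies `ρ(I)(A)L ⊆ I`. -/
def IsIdealL (I : Submodule F L) : Prop :=
  (∀ (x : L), ∀ y ∈ I, ⁅x, y⁆ ∈ I) ∧ (∀ (a : A), ∀ y ∈ I, a • y ∈ I) ∧
  (∀ v ∈ I, ∀ (a : A) (w : L), (𝔏.ρ v a) • w ∈ I)

/-- A graded submodule of `L`. -/
def IsGradedL (I : Submodule F L) : Prop := I = ⨆ k : G, I ⊓ 𝔏.𝓛 k

/-- A graded ideal of `(L,A)`. -/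
def IsGradedIdealL (I : Submodule F L) : Prop := 𝔏.IsIdealL I ∧ 𝔏.IsGradedL I

/-- `(L,A)` is gr-simple. -/
def GrSimpleL : Prop :=
  (∃ v w : L, ⁅v, w⁆ ≠ 0) ∧ (∃ a b : A, a * b ≠ 0) ∧ (∃ (a : A) (v : L), a • v ≠ 0) ∧
  ∀ I : Submodule F L, 𝔏.IsGradedIdealL I → I = ⊥ ∨ I = ⊤ ∨ I = LinearMap.ker 𝔏.ρ

/-- The span of products `A_h · A_g`. -/
def mulSub (h g : G) : Submodule F A :=
  Submodule.span F {x | ∃ a ∈ 𝔏.𝓐 h, ∃ b ∈ 𝔏.𝓐 g, x = a * b}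

/-- The span of `ρ(L_h)(A_g)`. -/
def rhoSub (h g : G) : Submodule F A :=
  Submodule.span F {x | ∃ v ∈ 𝔏.𝓛 h, ∃ a ∈ 𝔏.𝓐 g, x = 𝔏.ρ v a}

/-- `A_{[g],1}`. -/
def A1class (g : G) : Submodule F A :=
  (⨆ g' ∈ {g' | g' ∈ 𝔏.SuppA ∧ 𝔏.LambdaConnected g g' ∧ g' ∈ 𝔏.SuppL}, 𝔏.rhoSub g'⁻¹ g') ⊔
  (⨆ g' ∈ {g' | g' ∈ 𝔏.SuppA ∧ 𝔏.LambdaConnected g g'}, 𝔏.mulSub g'⁻¹ g')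

/-- `A_{[g]}`. -/
def Aclass (g : G) : Submodule F A :=
  ⨆ g' ∈ {g' | g' ∈ 𝔏.SuppA ∧ 𝔏.LambdaConnected g g'}, 𝔏.𝓐 g'

/-- `𝒜_{[g]} = A_{[g],1} ⊕ A_{[g]}`. -/
def calA (g : G) : Submodule F A := 𝔏.A1class g ⊔ 𝔏.Aclass g

/-- `Σ_{g ∈ Λ_G ∩ Σ_G} ρ(L_{g⁻¹})(A_g) + Σ_{g ∈ Λ_G} A_{g⁻¹} A_g`. -/
def A1full : Submodule F A :=
  (⨆ g ∈ 𝔏.SuppA ∩ 𝔏.SuppL, 𝔏.rhoSub g⁻¹ g) ⊔ (⨆ g ∈ 𝔏.SuppA, 𝔏.mulSub g⁻¹ g)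

/-- An ideal of the commutative associative algebra `A`. -/
def IsIdealA (I : Submodule F A) : Prop := ∀ (a : A), ∀ x ∈ I, a * x ∈ I

/-- A graded submodule of `A`. -/
def IsGradedA (I : Submodule F A) : Prop := I = ⨆ k : G, I ⊓ 𝔏.𝓐 k

/-- A graded ideal of `A`. -/
def IsGradedIdealA (I : Submodule F A) : Prop := IsIdealA I ∧ 𝔏.IsGradedA I

/-- `A` is gr-simple. -/
def GrSimpleA : Prop :=
  (∃ a b : A, a * b ≠ 0) ∧
  ∀ I : Submodule F A, 𝔏.IsGradedIdealA I → I = ⊥ ∨ I = ⊤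

/-- The graded Lie-Rinehart algebra `(L,A)` is tight. -/
def Tight : Prop :=
  (∀ v : L, (∀ w : L, ⁅v, w⁆ = 0) → 𝔏.ρ v = 0 → v = 0) ∧
  (∀ v : L, (∀ a : A, a • v = 0) → v = 0) ∧
  (∀ a : A, (∀ b : A, a * b = 0) → a = 0) ∧
  Submodule.span F {x : A | ∃ b c : A, x = b * c} = ⊤ ∧
  Submodule.span F {x : L | ∃ (a : A) (w : L), x = a • w} = ⊤ ∧
  𝔏.𝓛 1 = 𝔏.L1full ∧ 𝔏.𝓐 1 = 𝔏.A1full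

/-- `(L,A)` is of maximal length. -/
def MaximalLength : Prop :=
  (∀ g ∈ 𝔏.SuppL, Module.rank F (𝔏.𝓛 g) = 1) ∧ (∀ k ∈ 𝔏.SuppA, Module.rank F (𝔏.𝓐 k) = 1)

/-- `(L,A)` is `G`-multiplicative. -/
def GMultiplicative : Prop :=
  (∀ g ∈ 𝔏.SuppL, ∀ h ∈ 𝔏.SuppL, g * h ∈ 𝔏.SuppL → ∃ v ∈ 𝔏.𝓛 g, ∃ w ∈ 𝔏.𝓛 h, ⁅v, w⁆ ≠ 0) ∧
  (∀ k ∈ 𝔏.SuppA, ∀ g ∈ 𝔏.SuppL, k * g ∈ 𝔏.SuppL → ∃ a ∈ 𝔏.𝓐 k, ∃ v ∈ 𝔏.𝓛 g, a • v ≠ 0) ∧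
  (∀ k ∈ 𝔏.SuppA, ∀ j ∈ 𝔏.SuppA, k * j ∈ 𝔏.SuppA → ∃ a ∈ 𝔏.𝓐 k, ∃ b ∈ 𝔏.𝓐 j, a * b ≠ 0)

/-- A gr-simple ideal of `(L,A)`: a graded ideal with nonzero bracket whose only graded
ideals of `L` contained in it are `0`, itself and its intersection with `Ker ρ`. -/
def GrSimpleIdealL (I : Submodule F L) : Prop :=
  𝔏.IsGradedIdealL I ∧ (∃ x ∈ I, ∃ y ∈ I, ⁅x, y⁆ ≠ 0) ∧
  ∀ J : Submodule F L, 𝔏.IsGradedIdealL J → J ≤ I →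
    (J = ⊥ ∨ J = I ∨ J = LinearMap.ker 𝔏.ρ ⊓ I)

end GradedLieRinehart

open GradedLieRinehart

variable {F : Type*} [Field F] {G : Type*} [CommGroup G] [DecidableEq G]
  {A : Type*} [CommRing A] [Algebra F A]
  {L : Type*} [LieRing L] [LieAlgebra F L] [Module A L] [IsScalarTower F A L]

/-!
`Λ_G`-connectedness `~` is an equivalence relation on `Λ_G^± ∪ Σ_G^±`, the set through which
the chains run, and `g ~ g⁻¹`. The grading is compatible with it: a nonzero product
`a * b`, `ρ v a` or `⁅v, w⁆` of homogeneous elements of degrees `k₁`, `k₂` has degree `k₁ k₂`,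
which is `1` or lies in a support, and in both cases `k₁ ~ k₂`. Hence homogeneous elements of
non-connected degrees multiply to zero, and checking the generators of `𝒜_{[g]}` one by one
(with the Leibniz rule for `ρ`) gives `𝒜_{[g]} 𝒜_{[h]} = 0` for `[g] ≠ [h]`. Together with
`A_1 = Σ A_{g⁻¹} A_g + Σ ρ(L_{g⁻¹}) A_g` the ideals `𝒜_{[g]}` span `A`, and an element of
`𝒜_{[g]} ∩ Σ_{[h] ≠ [g]} 𝒜_{[h]}` annihilates every `𝒜_{[k]}`, hence lies in `Ann(A) = 0`.
-/

open Relation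

namespace ChainConnected

variable {G : Type*} [CommGroup G] {M : Set G}

/-- `a` and `b` are consecutive partial products of a chain: `a ∈ M` and `b = a * k`, `k ∈ M`. -/
def Step (M : Set G) (a b : G) : Prop := a ∈ M ∧ a⁻¹ * b ∈ M

theorem reflTransGen_step_prod {c : List G} {g : G} (hhead : c.head? = some g)
    (hmem : ∀ k ∈ c, k ∈ M) (hpart : ∀ i : ℕ, 0 < i → i < c.length → (c.take i).prod ∈ M) :
    ReflTransGen (Step M) g c.prod := by
  induction c using List.reverseRecOn with
  | nil => simp at hhead
  | append_singleton d k ih =>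
    rcases eq_or_ne d [] with rfl | hd
    · obtain rfl : k = g := by simpa using hhead
      simpa using ReflTransGen.refl
    have hdM : d.prod ∈ M := by
      simpa using hpart d.length (List.length_pos_iff.2 hd) (by simp)
    have hstep : Step M d.prod (d ++ [k]).prod :=
      ⟨hdM, by simpa using hmem k (by simp)⟩
    refine ReflTransGen.tail (ih ?_ (fun x hx => hmem x (by simp [hx])) fun i hi hid => ?_) hstep
    · rwa [List.head?_append_of_ne_nil d hd] at hhead
    · simpa [List.take_append_of_le_length hid.le] using hpart i hi (by simp; omega)

theorem exists_chain_of_reflTransGen {g x : G} (hg : g ∈ M) (hgx : ReflTransGen (Step M) g x) :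
    ∃ c : List G, c.head? = some g ∧ (∀ k ∈ c, k ∈ M) ∧
      (∀ i : ℕ, 0 < i → i < c.length → (c.take i).prod ∈ M) ∧ c.prod = x := by
  induction hgx with
  | refl => exact ⟨[g], rfl, by simpa using hg, fun i hi hi' => by simp at hi'; omega, by simp⟩
  | @tail y z _ hyz ih =>
    obtain ⟨c, hhead, hmem, hpart, rfl⟩ := ih
    have hc : c ≠ [] := by rintro rfl; simp at hhead
    refine ⟨c ++ [(c.prod)⁻¹ * z], by rwa [List.head?_append_of_ne_nil c hc], ?_, ?_, by simp⟩
    · simp only [List.mem_append, List.mem_singleton]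
      rintro k (hk | rfl)
      exacts [hmem k hk, hyz.2]
    · intro i hi hic
      rcases (Nat.lt_succ_iff.1 (by simpa using hic)).lt_or_eq with hic | rfl
      · simpa [List.take_append_of_le_length hic.le] using hpart i hi hic
      · simpa using hyz.1

theorem iff_reflTransGen {g g' : G} :
    ChainConnected M ∅ g g' ↔
      g ∈ M ∧ ∃ x, ReflTransGen (Step M) g x ∧ (x = g' ∨ x = g'⁻¹) := by
  constructor
  · rintro ⟨c, hc, hhead, hmem, hpart, hprod⟩
    simp only [Set.union_empty] at hmem
    exact ⟨hmem g (List.mem_of_head? hhead), c.prod, reflTransGen_step_prod hhead hmem hpart, hprod⟩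
  · rintro ⟨hg, x, hgx, hx⟩
    obtain ⟨c, hhead, hmem, hpart, rfl⟩ := exists_chain_of_reflTransGen hg hgx
    refine ⟨c, ?_, hhead, fun k hk => Or.inl (hmem k hk), hpart, hx⟩
    rintro rfl
    simp at hhead

theorem Step.inv (hM : ∀ x ∈ M, x⁻¹ ∈ M) {a b : G} (h : Step M a b) : Step M a⁻¹ b⁻¹ :=
  ⟨hM a h.1, by simpa [mul_comm] using hM _ h.2⟩

theorem reflTransGen_step_inv (hM : ∀ x ∈ M, x⁻¹ ∈ M) {a b : G} (h : ReflTransGen (Step M) a b) :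
    ReflTransGen (Step M) a⁻¹ b⁻¹ := by
  induction h with
  | refl => exact ReflTransGen.refl
  | tail _ hstep ih => exact ih.tail (hstep.inv hM)

-- Every term of the path but the last lies in `M`; so does the last one, so the path reverses.
theorem reflTransGen_step_symm (hM : ∀ x ∈ M, x⁻¹ ∈ M) {a b : G} (h : ReflTransGen (Step M) a b)
    (hb : b ∈ M) :
    ReflTransGen (Step M) b a := by
  induction h with
  | refl => exact ReflTransGen.refl
  | tail _ hstep ih =>
    exact (ih hstep.1).head ⟨hb, by simpa [mul_comm] using hM _ hstep.2⟩

theorem symm (hM : ∀ x ∈ M, x⁻¹ ∈ M) {g g' : G} (h : ChainConnected M ∅ g g')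
    (hg' : g' ∈ M) :
    ChainConnected M ∅ g' g := by
  obtain ⟨hg, x, hgx, rfl | rfl⟩ := iff_reflTransGen.1 h
  · exact iff_reflTransGen.2 ⟨hg', g, reflTransGen_step_symm hM hgx hg', Or.inl rfl⟩
  · have hxg := reflTransGen_step_inv hM (reflTransGen_step_symm hM hgx (hM _ hg'))
    exact iff_reflTransGen.2 ⟨hg', g⁻¹, by simpa using hxg, Or.inr rfl⟩

theorem trans (hM : ∀ x ∈ M, x⁻¹ ∈ M) {g g' g'' : G} (h : ChainConnected M ∅ g g')
    (h' : ChainConnected M ∅ g' g'') :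
    ChainConnected M ∅ g g'' := by
  obtain ⟨hg, x, hgx, rfl | rfl⟩ := iff_reflTransGen.1 h <;>
    obtain ⟨-, y, hxy, hy⟩ := iff_reflTransGen.1 h'
  · exact iff_reflTransGen.2 ⟨hg, y, hgx.trans hxy, hy⟩
  · refine iff_reflTransGen.2
      ⟨hg, y⁻¹, by simpa using hgx.trans (reflTransGen_step_inv hM hxy), ?_⟩
    rcases hy with rfl | rfl
    exacts [Or.inr rfl, Or.inl (inv_inv _)]

theorem refl {g : G} (hg : g ∈ M) : ChainConnected M ∅ g g :=
  iff_reflTransGen.2 ⟨hg, g, ReflTransGen.refl, Or.inl rfl⟩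

theorem inv_right {g g' : G} (h : ChainConnected M ∅ g g') : ChainConnected M ∅ g g'⁻¹ := by
  obtain ⟨hg, x, hgx, hx⟩ := iff_reflTransGen.1 h
  exact iff_reflTransGen.2 ⟨hg, x, hgx, by rw [inv_inv]; exact hx.symm⟩

theorem mul_right {g k : G} (hg : g ∈ M) (hk : k ∈ M) : ChainConnected M ∅ g (g * k) :=
  iff_reflTransGen.2 ⟨hg, g * k, ReflTransGen.single ⟨hg, by simpa using hk⟩, Or.inl rfl⟩

theorem of_mul {k₁ k₂ : G} (hM : ∀ x ∈ M, x⁻¹ ∈ M) (hk₁ : k₁ ∈ M) (hk₂ : k₂ ∈ M)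
    (h : k₁ * k₂ = 1 ∨ k₁ * k₂ ∈ M) : ChainConnected M ∅ k₁ k₂ := by
  rcases h with h | h
  · simpa [eq_inv_of_mul_eq_one_right h] using inv_right (refl hk₁)
  · have h₂ : ChainConnected M ∅ k₂ (k₁ * k₂) := by simpa [mul_comm] using mul_right hk₂ hk₁
    exact (mul_right hk₁ hk₂).trans hM (h₂.symm hM h)

end ChainConnected

namespace GradedLieRinehart

variable (𝔏 : GradedLieRinehart F G A L)

theorem inv_mem_Lpm_union_Spm {k : G} (hk : k ∈ 𝔏.Lpm ∪ 𝔏.Spm) : k⁻¹ ∈ 𝔏.Lpm ∪ 𝔏.Spm := by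
  rcases hk with hk | hk
  · exact Or.inl (by simpa [Lpm, or_comm] using hk)
  · exact Or.inr (by simpa [Spm, or_comm] using hk)

theorem suppA_subset : 𝔏.SuppA ⊆ 𝔏.Lpm ∪ 𝔏.Spm := fun _ hk => Or.inl (Or.inl hk)

theorem inv_mem_Lpm_union_Spm_of_mem_suppA {k : G} (hk : k ∈ 𝔏.SuppA) :
    k⁻¹ ∈ 𝔏.Lpm ∪ 𝔏.Spm :=
  Or.inl (Or.inr (by simpa using hk))

theorem suppL_subset : 𝔏.SuppL ⊆ 𝔏.Lpm ∪ 𝔏.Spm := fun _ hk => Or.inr (Or.inl hk)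

theorem eq_one_or_mem_suppA {k : G} {a : A} (ha : a ∈ 𝔏.𝓐 k) (ha0 : a ≠ 0) :
    k = 1 ∨ k ∈ 𝔏.SuppA :=
  or_iff_not_imp_left.2 fun hk => ⟨hk, fun hbot => ha0 (by simpa [hbot] using ha)⟩

theorem eq_one_or_mem_suppL {k : G} {v : L} (hv : v ∈ 𝔏.𝓛 k) (hv0 : v ≠ 0) :
    k = 1 ∨ k ∈ 𝔏.SuppL :=
  or_iff_not_imp_left.2 fun hk => ⟨hk, fun hbot => hv0 (by simpa [hbot] using hv)⟩

variable {𝔏}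

theorem lambdaConnected_refl {g : G} (hg : g ∈ 𝔏.Lpm ∪ 𝔏.Spm) : 𝔏.LambdaConnected g g :=
  ChainConnected.refl hg

theorem LambdaConnected.symm {g g' : G} (h : 𝔏.LambdaConnected g g')
    (hg' : g' ∈ 𝔏.Lpm ∪ 𝔏.Spm) : 𝔏.LambdaConnected g' g :=
  ChainConnected.symm (fun _ => 𝔏.inv_mem_Lpm_union_Spm) h hg'

theorem LambdaConnected.trans {g g' g'' : G} (h : 𝔏.LambdaConnected g g')
    (h' : 𝔏.LambdaConnected g' g'') : 𝔏.LambdaConnected g g'' :=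
  ChainConnected.trans (fun _ => 𝔏.inv_mem_Lpm_union_Spm) h h'

theorem LambdaConnected.inv_right {g g' : G} (h : 𝔏.LambdaConnected g g') :
    𝔏.LambdaConnected g g'⁻¹ :=
  ChainConnected.inv_right h

theorem lambdaConnected_of_mul {k₁ k₂ : G} (hk₁ : k₁ ∈ 𝔏.Lpm ∪ 𝔏.Spm)
    (hk₂ : k₂ ∈ 𝔏.Lpm ∪ 𝔏.Spm) (h : k₁ * k₂ = 1 ∨ k₁ * k₂ ∈ 𝔏.Lpm ∪ 𝔏.Spm) :
    𝔏.LambdaConnected k₁ k₂ :=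
  ChainConnected.of_mul (fun _ => 𝔏.inv_mem_Lpm_union_Spm) hk₁ hk₂ h

theorem mul_eq_zero_of_not_lambdaConnected {k₁ k₂ : G} (hk₁ : k₁ ∈ 𝔏.Lpm ∪ 𝔏.Spm)
    (hk₂ : k₂ ∈ 𝔏.Lpm ∪ 𝔏.Spm) (hk : ¬ 𝔏.LambdaConnected k₁ k₂)
    {a b : A} (ha : a ∈ 𝔏.𝓐 k₁) (hb : b ∈ 𝔏.𝓐 k₂) : a * b = 0 := by
  by_contra hab
  exact hk (lambdaConnected_of_mul hk₁ hk₂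
    ((𝔏.eq_one_or_mem_suppA (𝔏.mul_mem ha hb) hab).imp_right (𝔏.suppA_subset ·)))

theorem rho_apply_eq_zero_of_not_lambdaConnected {k₁ k₂ : G} (hk₁ : k₁ ∈ 𝔏.Lpm ∪ 𝔏.Spm)
    (hk₂ : k₂ ∈ 𝔏.Lpm ∪ 𝔏.Spm) (hk : ¬ 𝔏.LambdaConnected k₁ k₂)
    {v : L} {a : A} (hv : v ∈ 𝔏.𝓛 k₁) (ha : a ∈ 𝔏.𝓐 k₂) : 𝔏.ρ v a = 0 := by
  by_contra hva
  exact hk (lambdaConnected_of_mul hk₁ hk₂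
    ((𝔏.eq_one_or_mem_suppA (𝔏.rho_mem hv ha) hva).imp_right (𝔏.suppA_subset ·)))

theorem lie_eq_zero_of_not_lambdaConnected {k₁ k₂ : G} (hk₁ : k₁ ∈ 𝔏.Lpm ∪ 𝔏.Spm)
    (hk₂ : k₂ ∈ 𝔏.Lpm ∪ 𝔏.Spm) (hk : ¬ 𝔏.LambdaConnected k₁ k₂)
    {v w : L} (hv : v ∈ 𝔏.𝓛 k₁) (hw : w ∈ 𝔏.𝓛 k₂) : ⁅v, w⁆ = 0 := by
  by_contra hvw
  exact hk (lambdaConnected_of_mul hk₁ hk₂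
    ((𝔏.eq_one_or_mem_suppL (𝔏.bracket_mem hv hw) hvw).imp_right (𝔏.suppL_subset ·)))

theorem calA_le {g : G} {p : Submodule F A}
    (hrho : ∀ g' ∈ 𝔏.SuppA, 𝔏.LambdaConnected g g' →
      ∀ v ∈ 𝔏.𝓛 g'⁻¹, ∀ a ∈ 𝔏.𝓐 g', 𝔏.ρ v a ∈ p)
    (hmul : ∀ g' ∈ 𝔏.SuppA, 𝔏.LambdaConnected g g' →
      ∀ a ∈ 𝔏.𝓐 g'⁻¹, ∀ b ∈ 𝔏.𝓐 g', a * b ∈ p)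
    (hhom : ∀ g' ∈ 𝔏.SuppA, 𝔏.LambdaConnected g g' → 𝔏.𝓐 g' ≤ p) :
    𝔏.calA g ≤ p := by
  refine sup_le (sup_le ?_ ?_) (iSup₂_le fun g' hg' => hhom g' hg'.1 hg'.2)
  · refine iSup₂_le fun g' hg' => span_le.2 ?_
    rintro _ ⟨v, hv, a, ha, rfl⟩
    exact hrho g' hg'.1 hg'.2.1 v hv a ha
  · refine iSup₂_le fun g' hg' => span_le.2 ?_
    rintro _ ⟨a, ha, b, hb, rfl⟩
    exact hmul g' hg'.1 hg'.2 a ha b hb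

theorem mul_eq_zero_of_mem_calA_of_mem_𝓐 {g k : G} (hk : k ∈ 𝔏.Lpm ∪ 𝔏.Spm)
    (hgk : ¬ 𝔏.LambdaConnected g k) {x b : A} (hx : x ∈ 𝔏.calA g) (hb : b ∈ 𝔏.𝓐 k) :
    x * b = 0 := by
  suffices 𝔏.calA g ≤ LinearMap.ker (LinearMap.mulRight F b) from this hx
  refine calA_le (fun g' hg' hgg' v hv a ha => ?_) (fun g' hg' hgg' a _ c hc => ?_)
    (fun g' hg' hgg' a ha => ?_) <;>
    rw [LinearMap.mem_ker, LinearMap.mulRight_apply]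
  · have hab := mul_eq_zero_of_not_lambdaConnected (𝔏.suppA_subset hg') hk
      (fun h => hgk (hgg'.trans h)) ha hb
    have hvb := rho_apply_eq_zero_of_not_lambdaConnected
      (𝔏.inv_mem_Lpm_union_Spm_of_mem_suppA hg') hk (fun h => hgk (hgg'.inv_right.trans h))
      hv hb
    have hleib := (𝔏.ρ v).leibniz a b
    rw [hab, map_zero, hvb, smul_zero, zero_add, smul_eq_mul, mul_comm] at hleib
    exact hleib.symm
  · rw [mul_assoc, mul_eq_zero_of_not_lambdaConnected (𝔏.suppA_subset hg') hk
      (fun h => hgk (hgg'.trans h)) hc hb, mul_zero]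
  · exact mul_eq_zero_of_not_lambdaConnected (𝔏.suppA_subset hg') hk
      (fun h => hgk (hgg'.trans h)) ha hb

theorem rho_apply_eq_zero_of_mem_𝓛_of_mem_calA {g k : G} (hk : k ∈ 𝔏.Lpm ∪ 𝔏.Spm)
    (hgk : ¬ 𝔏.LambdaConnected g k) {w : L} (hw : w ∈ 𝔏.𝓛 k) {x : A} (hx : x ∈ 𝔏.calA g) :
    𝔏.ρ w x = 0 := by
  have hkg' : ∀ {g'}, g' ∈ 𝔏.SuppA → 𝔏.LambdaConnected g g' → ¬ 𝔏.LambdaConnected k g' :=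
    fun hg' hgg' h => hgk (hgg'.trans (h.symm (𝔏.suppA_subset hg')))
  have hkg'_inv : ∀ {g'}, g' ∈ 𝔏.SuppA → 𝔏.LambdaConnected g g' →
      ¬ 𝔏.LambdaConnected k g'⁻¹ :=
    fun hg' hgg' h => hkg' hg' hgg' (by simpa using h.inv_right)
  suffices 𝔏.calA g ≤ LinearMap.ker (𝔏.ρ w : A →ₗ[F] A) from this hx
  refine calA_le (fun g' hg' hgg' v hv a ha => ?_) (fun g' hg' hgg' a ha c hc => ?_)
    (fun g' hg' hgg' a ha => ?_) <;>
    rw [LinearMap.mem_ker, Derivation.coeFn_coe]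
  · have hwa := rho_apply_eq_zero_of_not_lambdaConnected hk (𝔏.suppA_subset hg')
      (hkg' hg' hgg') hw ha
    have hwv := lie_eq_zero_of_not_lambdaConnected hk
      (𝔏.inv_mem_Lpm_union_Spm_of_mem_suppA hg') (hkg'_inv hg' hgg') hw hv
    have hcomm := DFunLike.congr_fun (𝔏.ρ_bracket w v) a
    rw [hwv, map_zero, Derivation.zero_apply, Derivation.commutator_apply, hwa, map_zero,
      sub_zero] at hcomm
    exact hcomm.symm
  · rw [Derivation.leibniz,
      rho_apply_eq_zero_of_not_lambdaConnected hk (𝔏.suppA_subset hg') (hkg' hg' hgg') hw hc,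
      rho_apply_eq_zero_of_not_lambdaConnected hk (𝔏.inv_mem_Lpm_union_Spm_of_mem_suppA hg')
        (hkg'_inv hg' hgg') hw ha, smul_zero, smul_zero, add_zero]
  · exact rho_apply_eq_zero_of_not_lambdaConnected hk (𝔏.suppA_subset hg') (hkg' hg' hgg') hw ha

theorem mul_eq_zero_of_mem_calA {g h : G} (hgh : ¬ 𝔏.LambdaConnected g h) {x y : A}
    (hx : x ∈ 𝔏.calA g) (hy : y ∈ 𝔏.calA h) : x * y = 0 := by
  have hgh' : ∀ {h'}, h' ∈ 𝔏.SuppA → 𝔏.LambdaConnected h h' → ¬ 𝔏.LambdaConnected g h' :=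
    fun hh' hhh' hgh' => hgh (hgh'.trans (hhh'.symm (𝔏.suppA_subset hh')))
  have hgh'_inv : ∀ {h'}, h' ∈ 𝔏.SuppA → 𝔏.LambdaConnected h h' →
      ¬ 𝔏.LambdaConnected g h'⁻¹ :=
    fun hh' hhh' hgh'' => hgh' hh' hhh' (by simpa using hgh''.inv_right)
  suffices 𝔏.calA h ≤ LinearMap.ker (LinearMap.mulLeft F x) from this hy
  refine calA_le (fun h' hh' hhh' w hw b hb => ?_) (fun h' hh' hhh' a ha b _ => ?_)
    (fun h' hh' hhh' b hb => ?_) <;>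
    rw [LinearMap.mem_ker, LinearMap.mulLeft_apply]
  · have hleib := (𝔏.ρ w).leibniz x b
    rw [mul_eq_zero_of_mem_calA_of_mem_𝓐 (𝔏.suppA_subset hh') (hgh' hh' hhh') hx hb, map_zero,
      rho_apply_eq_zero_of_mem_𝓛_of_mem_calA (𝔏.inv_mem_Lpm_union_Spm_of_mem_suppA hh')
        (hgh'_inv hh' hhh') hw hx, smul_zero, add_zero, smul_eq_mul] at hleib
    exact hleib.symm
  · rw [← mul_assoc, mul_eq_zero_of_mem_calA_of_mem_𝓐
      (𝔏.inv_mem_Lpm_union_Spm_of_mem_suppA hh') (hgh'_inv hh' hhh') hx ha, zero_mul]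
  · exact mul_eq_zero_of_mem_calA_of_mem_𝓐 (𝔏.suppA_subset hh') (hgh' hh' hhh') hx hb

theorem 𝓐_le_calA {g : G} (hg : g ∈ 𝔏.SuppA) : 𝔏.𝓐 g ≤ 𝔏.calA g :=
  le_sup_of_le_right (le_iSup₂_of_le g ⟨hg, lambdaConnected_refl (𝔏.suppA_subset hg)⟩ le_rfl)

theorem rhoSub_le_calA {g : G} (hg : g ∈ 𝔏.SuppA) (hgL : g ∈ 𝔏.SuppL) :
    𝔏.rhoSub g⁻¹ g ≤ 𝔏.calA g :=
  le_sup_of_le_left <| le_sup_of_le_left <|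
    le_iSup₂_of_le g ⟨hg, lambdaConnected_refl (𝔏.suppA_subset hg), hgL⟩ le_rfl

theorem mulSub_le_calA {g : G} (hg : g ∈ 𝔏.SuppA) : 𝔏.mulSub g⁻¹ g ≤ 𝔏.calA g :=
  le_sup_of_le_left <| le_sup_of_le_right <|
    le_iSup₂_of_le g ⟨hg, lambdaConnected_refl (𝔏.suppA_subset hg)⟩ le_rfl

theorem iSup_calA_eq_top (hA1 : 𝔏.𝓐 1 = 𝔏.A1full) : ⨆ g ∈ 𝔏.SuppA, 𝔏.calA g = ⊤ := by
  rw [eq_top_iff, ← 𝔏.internalA.submodule_iSup_eq_top]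
  refine iSup_le fun k => ?_
  rcases eq_or_ne k 1 with rfl | hk1
  · rw [hA1]
    exact sup_le (iSup₂_le fun g hg => le_iSup₂_of_le g hg.1 (rhoSub_le_calA hg.1 hg.2))
      (iSup₂_le fun g hg => le_iSup₂_of_le g hg (mulSub_le_calA hg))
  by_cases hk : k ∈ 𝔏.SuppA
  · exact le_iSup₂_of_le k hk (𝓐_le_calA hk)
  · rw [show 𝔏.𝓐 k = ⊥ from not_not.1 fun hbot => hk ⟨hk1, hbot⟩]
    exact bot_le

theorem calA_inf_iSup_calA_eq_bot (hAnn : ∀ a : A, (∀ b : A, a * b = 0) → a = 0)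
    (hA1 : 𝔏.𝓐 1 = 𝔏.A1full) (g : G) :
    𝔏.calA g ⊓ (⨆ h ∈ {h | h ∈ 𝔏.SuppA ∧ ¬ 𝔏.LambdaConnected g h}, 𝔏.calA h) = ⊥ := by
  refine eq_bot_iff.2 fun x hx => (mem_bot F).2 (hAnn x fun b => ?_)
  obtain ⟨hxg, hxh⟩ := mem_inf.1 hx
  have hb : b ∈ ⨆ k ∈ 𝔏.SuppA, 𝔏.calA k := iSup_calA_eq_top hA1 ▸ mem_top
  suffices (⨆ k ∈ 𝔏.SuppA, 𝔏.calA k) ≤ LinearMap.ker (LinearMap.mulLeft F x) from this hb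
  refine iSup₂_le fun k hk y hy => ?_
  rw [LinearMap.mem_ker, LinearMap.mulLeft_apply]
  by_cases hgk : 𝔏.LambdaConnected g k
  · suffices (⨆ h ∈ {h | h ∈ 𝔏.SuppA ∧ ¬ 𝔏.LambdaConnected g h}, 𝔏.calA h) ≤
        LinearMap.ker (LinearMap.mulRight F y) from this hxh
    refine iSup₂_le fun h hh z hz => ?_
    rw [LinearMap.mem_ker, LinearMap.mulRight_apply]
    exact mul_eq_zero_of_mem_calA
      (fun hhk => hh.2 (hgk.trans (hhk.symm (𝔏.suppA_subset hk)))) hz hy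
  · exact mul_eq_zero_of_mem_calA hgk hxg hy

end GradedLieRinehart

/-- If `Ann(A) = 0` and `A_1 = A1full` then `A` is the direct sum of the graded ideals
`𝒜_{[g]}`, with `𝒜_{[g]} 𝒜_{[h]} = 0` for distinct classes. -/
theorem directSum_A (𝔏 : GradedLieRinehart F G A L)
    (hAnn : ∀ a : A, (∀ b : A, a * b = 0) → a = 0)
    (hA1 : 𝔏.𝓐 1 = 𝔏.A1full) :
    ((⊤ : Submodule F A) = ⨆ g ∈ 𝔏.SuppA, 𝔏.calA g) ∧
    (∀ g ∈ 𝔏.SuppA,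
      𝔏.calA g ⊓ (⨆ h ∈ {h | h ∈ 𝔏.SuppA ∧ ¬ 𝔏.LambdaConnected g h}, 𝔏.calA h) = ⊥) ∧
    (∀ g ∈ 𝔏.SuppA, ∀ h ∈ 𝔏.SuppA, ¬ 𝔏.LambdaConnected g h →
      ∀ x ∈ 𝔏.calA g, ∀ y ∈ 𝔏.calA h, x * y = 0) :=
  ⟨(iSup_calA_eq_top hA1).symm, fun g _ => calA_inf_iSup_calA_eq_bot hAnn hA1 g,
    fun _ _ _ _ hgh _ hx _ hy => mul_eq_zero_of_mem_calA hgh hx hy⟩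
end

section
/- Let (L,A) be a tight G-graded Lie-Rinehart algebra. Then for every class [g] ∈ Σ_G/~ there exists a unique class [h] ∈ Λ_G/≈ such that 𝒜_{[h]}·I_{[g]} ≠ 0. -/
open Submodule

open GradedLieRinehart

variable {F : Type*} [Field F] {G : Type*} [CommGroup G] [DecidableEq G]
  {A : Type*} [CommRing A] [Algebra F A]
  {L : Type*} [LieRing L] [LieAlgebra F L] [Module A L] [IsScalarTower F A L]

section ChainLemmas
variable {G : Type*} [CommGroup G]
variable {M O S : Set G} {x y z d : G}

lemma cc_single (hx : x ∈ M) : ChainConnected M O x x :=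
  ⟨[x], by simp, by simp, by simp [hx], by intro i h1 h2; simp at h2; omega, by simp⟩

lemma cc_inv_target (h : ChainConnected M O x y) : ChainConnected M O x y⁻¹ := by
  obtain ⟨c, h1, h2, h3, h4, h5⟩ := h
  exact ⟨c, h1, h2, h3, h4, by rw [inv_inv]; tauto⟩

lemma cc_two (hx : x ∈ M) (hd : d ∈ M) : ChainConnected M O x (x * d) := by
  refine ⟨[x, d], by simp, by simp, by simp [hx, hd], ?_, by simp⟩
  intro i h1 h2
  simp only [List.length] at h2
  interval_cases i
  · simpa using hx

lemma cc_three (hM : ∀ a ∈ M, a⁻¹ ∈ M) (hx : x ∈ M) (hd : d ∈ M) (hxd : x * d ∈ M) :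
    ChainConnected M O x d := by
  refine ⟨[x, d, x⁻¹], by simp, by simp, by simp [hx, hd, hM x hx], ?_, ?_⟩
  · intro i h1 h2
    simp only [List.length] at h2
    interval_cases i
    · simpa using hx
    · simpa using hxd
  · left; simp

private lemma prod_map_inv (l : List G) : (l.map (·⁻¹)).prod = l.prod⁻¹ := by
  induction l with
  | nil => simp
  | cons a t ih => simp [ih, mul_comm]

lemma cc_mono (hS : S ⊆ M) (hSO : S ∪ O ⊆ M) (h : ChainConnected S O x y) :
    ChainConnected M ∅ x y := by
  obtain ⟨c, h1, h2, h3, h4, h5⟩ := h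
  exact ⟨c, h1, h2, fun k hk => by simpa using hSO (h3 k hk),
    fun i hi1 hi2 => hS (h4 i hi1 hi2), h5⟩

lemma cc_trans (hM : ∀ a ∈ M, a⁻¹ ∈ M) (hy : y ∈ M)
    (hxy : ChainConnected M (∅ : Set G) x y) (hyz : ChainConnected M (∅ : Set G) y z) :
    ChainConnected M (∅ : Set G) x z := by
  obtain ⟨c1, h1, h2, h3, h4, h5⟩ := hxy
  obtain ⟨c2, g1, g2, g3, g4, g5⟩ := hyz
  obtain ⟨a, t, rfl⟩ : ∃ a t, c2 = a :: t := by
    cases c2 with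
    | nil => exact absurd rfl g1
    | cons a t => exact ⟨a, t, rfl⟩
  have hay : a = y := by simpa using g2
  subst a
  by_cases htn : t = []
  · subst htn
    simp only [List.prod_cons, List.prod_nil, mul_one] at g5
    rcases g5 with rfl | rfl
    · exact ⟨c1, h1, h2, h3, h4, h5⟩
    · refine ⟨c1, h1, h2, h3, h4, ?_⟩
      rcases h5 with h | h
      exacts [Or.inr h, Or.inl (by rw [h, inv_inv])]
  · -- t ≠ []
    rcases h5 with hp | hp
    · -- prod c1 = y, use c1 ++ t
      refine ⟨c1 ++ t, by simp [h1], ?_, ?_, ?_, ?_⟩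
      · rw [List.head?_append_of_ne_nil _ h1]; exact h2
      · intro k hk
        rcases List.mem_append.1 hk with hk | hk
        · exact h3 k hk
        · exact g3 k (List.mem_cons_of_mem _ hk)
      · intro i hi1 hi2
        rw [List.take_append, List.prod_append]
        rcases lt_trichotomy i c1.length with hlt | heq | hgt
        · rw [Nat.sub_eq_zero_of_le hlt.le]
          simpa using h4 i hi1 hlt
        · rw [heq, Nat.sub_self, List.take_length]
          simpa [hp] using hy
        · rw [List.take_of_length_le hgt.le, hp]
          have hj1 : 0 < i - c1.length := by omega
          have hj2 : i - c1.length < t.length := by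
            rw [List.length_append] at hi2; omega
          have := g4 (i - c1.length + 1) (by omega) (by simp; omega)
          simpa [List.take_cons, List.prod_cons] using this
      · rw [List.prod_append, hp]
        simpa using g5
    · -- prod c1 = y⁻¹, use c1 ++ t.map (·⁻¹)
      refine ⟨c1 ++ t.map (·⁻¹), by simp [h1], ?_, ?_, ?_, ?_⟩
      · rw [List.head?_append_of_ne_nil _ h1]; exact h2
      · intro k hk
        rcases List.mem_append.1 hk with hk | hk
        · exact h3 k hk
        · obtain ⟨b, hb, rfl⟩ := List.mem_map.1 hk
          have := g3 b (List.mem_cons_of_mem _ hb)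
          simp only [Set.union_empty] at this ⊢
          exact hM b this
      · intro i hi1 hi2
        rw [List.take_append, List.prod_append]
        rcases lt_trichotomy i c1.length with hlt | heq | hgt
        · rw [Nat.sub_eq_zero_of_le hlt.le]
          simpa using h4 i hi1 hlt
        · rw [heq, Nat.sub_self, List.take_length]
          simpa [hp] using hM y hy
        · rw [List.take_of_length_le hgt.le, hp]
          have hj1 : 0 < i - c1.length := by omega
          have hj2 : i - c1.length < t.length := by
            rw [List.length_append, List.length_map] at hi2; omega
          have hg := g4 (i - c1.length + 1) (by omega) (by simp; omega)
          rw [← List.map_take, prod_map_inv]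
          have : y⁻¹ * (List.take (i - c1.length) t).prod⁻¹
              = ((y :: t).take (i - c1.length + 1)).prod⁻¹ := by
            simp [List.take_cons, mul_inv, mul_comm]
          rw [this]
          exact hM _ hg
      · rw [List.prod_append, hp, prod_map_inv]
        have : y⁻¹ * t.prod⁻¹ = ((y :: t).prod)⁻¹ := by simp [mul_inv, mul_comm]
        rw [this]
        rcases g5 with hq | hq
        · right; rw [hq]
        · left; rw [hq, inv_inv]

lemma cc_symm (hM : ∀ a ∈ M, a⁻¹ ∈ M) (hx : x ∈ M) (hy : y ∈ M)
    (h : ChainConnected M (∅ : Set G) x y) : ChainConnected M (∅ : Set G) y x := by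
  obtain ⟨c, h1, h2, h3, h4, h5⟩ := h
  obtain ⟨a, t, rfl⟩ : ∃ a t, c = a :: t := by
    cases c with
    | nil => exact absurd rfl h1
    | cons a t => exact ⟨a, t, rfl⟩
  have hax : a = x := by simpa using h2
  subst a
  have key : ∀ j, ((x :: t).take (j + 1)).prod = x * (t.take j).prod := by
    intro j; simp [List.take_succ_cons]
  rcases h5 with hp | hp
  · -- prod = y : chain y :: (t.map (·⁻¹)).reverse
    have hprod_t : t.prod = x⁻¹ * y := by
      simp only [List.prod_cons] at hp
      rw [← hp]; group
    refine ⟨y :: (t.map (·⁻¹)).reverse, by simp, by simp, ?_, ?_, ?_⟩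
    · intro k hk
      simp only [List.mem_cons, List.mem_reverse, List.mem_map] at hk
      rcases hk with rfl | ⟨b, hb, rfl⟩
      · simp [hy]
      · have := h3 b (List.mem_cons_of_mem _ hb)
        simp only [Set.union_empty] at this ⊢
        exact hM b this
    · intro i hi1 hi2
      simp only [List.length_cons, List.length_reverse, List.length_map] at hi2
      obtain ⟨j, rfl⟩ : ∃ j, i = j + 1 := ⟨i - 1, by omega⟩
      have hjt : j ≤ t.length := by omega
      rw [List.take_succ_cons, List.prod_cons]
      rcases Nat.eq_zero_or_pos j with rfl | hjpos
      · simpa using hy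
      · have htk : (((t.map (·⁻¹)).reverse).take j).prod
            = (t.take (t.length - j)).prod * t.prod⁻¹ := by
          rw [List.take_reverse, List.prod_reverse]
          simp only [List.length_map]
          have hsplit := congrArg List.prod
            (List.take_append_drop (t.length - j) (t.map (·⁻¹)))
          rw [List.prod_append] at hsplit
          have hdrop : ((t.map (·⁻¹)).drop (t.length - j)).prod
              = ((t.map (·⁻¹)).take (t.length - j)).prod⁻¹ * (t.map (·⁻¹)).prod := by
            rw [← hsplit]; group
          rw [hdrop, ← List.map_take, prod_map_inv, prod_map_inv, inv_inv]
        rw [htk, hprod_t]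
        have heqn : y * ((t.take (t.length - j)).prod * (x⁻¹ * y)⁻¹)
            = x * (t.take (t.length - j)).prod := by
          rw [mul_inv, inv_inv, mul_comm x y⁻¹, mul_left_comm _ y⁻¹,
            mul_inv_cancel_left, mul_comm]
        rw [heqn, ← key]
        exact h4 _ (by omega) (by simp; omega)
    · left
      rw [List.prod_cons, List.prod_reverse, prod_map_inv, hprod_t,
        mul_inv, inv_inv, mul_comm x y⁻¹, mul_inv_cancel_left]
  · -- prod = y⁻¹ : chain y :: t.reverse
    have hprod_t : t.prod = x⁻¹ * y⁻¹ := by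
      simp only [List.prod_cons] at hp
      rw [← hp]; group
    refine ⟨y :: t.reverse, by simp, by simp, ?_, ?_, ?_⟩
    · intro k hk
      simp only [List.mem_cons, List.mem_reverse] at hk
      rcases hk with rfl | hb
      · simp [hy]
      · exact h3 k (List.mem_cons_of_mem _ hb)
    · intro i hi1 hi2
      simp only [List.length_cons, List.length_reverse] at hi2
      obtain ⟨j, rfl⟩ : ∃ j, i = j + 1 := ⟨i - 1, by omega⟩
      have hjt : j ≤ t.length := by omega
      rw [List.take_succ_cons, List.prod_cons]
      rcases Nat.eq_zero_or_pos j with rfl | hjpos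
      · simpa using hy
      · have htk : ((t.reverse).take j).prod
            = (t.take (t.length - j)).prod⁻¹ * t.prod := by
          rw [List.take_reverse, List.prod_reverse]
          have hsplit := congrArg List.prod (List.take_append_drop (t.length - j) t)
          rw [List.prod_append] at hsplit
          rw [← hsplit]; group
        rw [htk, hprod_t]
        have heqn : y * ((t.take (t.length - j)).prod⁻¹ * (x⁻¹ * y⁻¹))
            = (x * (t.take (t.length - j)).prod)⁻¹ := by
          rw [mul_comm x⁻¹ y⁻¹, mul_left_comm _ y⁻¹, mul_inv_cancel_left,
            mul_inv, mul_comm x⁻¹]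
        rw [heqn, ← key]
        exact hM _ (h4 _ (by omega) (by simp; omega))
    · right
      rw [List.prod_cons, List.prod_reverse, hprod_t, mul_comm x⁻¹ y⁻¹,
        mul_inv_cancel_left]


lemma cc_inv_target' {M O : Set G} {x y : G} (h : ChainConnected M O x y⁻¹) :
    ChainConnected M O x y := by
  have := cc_inv_target h
  rwa [inv_inv] at this

end ChainLemmas

section Helpers
variable {F : Type*} [Field F] {M N : Type*} [AddCommGroup M] [Module F M]
  [AddCommGroup N] [Module F N]

lemma sup_act {p q : Submodule F M} {φ : M →ₗ[F] N} {a : M}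
    (ha : a ∈ p ⊔ q) (h : φ a ≠ 0) :
    (∃ b ∈ p, φ b ≠ 0) ∨ (∃ b ∈ q, φ b ≠ 0) := by
  by_contra hc
  push_neg at hc
  have hle : p ⊔ q ≤ LinearMap.ker φ :=
    sup_le (fun b hb => LinearMap.mem_ker.2 (hc.1 b hb))
      (fun b hb => LinearMap.mem_ker.2 (hc.2 b hb))
  exact h (LinearMap.mem_ker.1 (hle ha))

lemma biSup_act {ι : Type*} {S : Set ι} {f : ι → Submodule F M} {φ : M →ₗ[F] N} {a : M}
    (ha : a ∈ ⨆ i ∈ S, f i) (h : φ a ≠ 0) : ∃ i ∈ S, ∃ b ∈ f i, φ b ≠ 0 := by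
  by_contra hc
  push_neg at hc
  have hle : (⨆ i ∈ S, f i) ≤ LinearMap.ker φ :=
    iSup₂_le fun i hi => fun b hb => LinearMap.mem_ker.2 (hc i hi b hb)
  exact h (LinearMap.mem_ker.1 (hle ha))

lemma iSup_act {ι : Type*} {f : ι → Submodule F M} {φ : M →ₗ[F] N} {a : M}
    (ha : a ∈ ⨆ i, f i) (h : φ a ≠ 0) : ∃ i, ∃ b ∈ f i, φ b ≠ 0 := by
  by_contra hc
  push_neg at hc
  have hle : (⨆ i, f i) ≤ LinearMap.ker φ :=
    iSup_le fun i => fun b hb => LinearMap.mem_ker.2 (hc i b hb)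
  exact h (LinearMap.mem_ker.1 (hle ha))

lemma span_act {S : Set M} {φ : M →ₗ[F] N} {a : M}
    (ha : a ∈ Submodule.span F S) (h : φ a ≠ 0) : ∃ x ∈ S, φ x ≠ 0 := by
  by_contra hc
  push_neg at hc
  have hle : Submodule.span F S ≤ LinearMap.ker φ :=
    Submodule.span_le.2 fun x hx => LinearMap.mem_ker.2 (hc x hx)
  exact h (LinearMap.mem_ker.1 (hle ha))

end Helpers

section Maps
variable {F : Type*} [Field F] {A : Type*} [CommRing A] [Algebra F A]
  {L : Type*} [LieRing L] [LieAlgebra F L] [Module A L] [IsScalarTower F A L]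

/-- `a ↦ a • v` as an `F`-linear map. -/
def actL (v : L) : A →ₗ[F] L where
  toFun a := a • v
  map_add' a b := add_smul a b v
  map_smul' r a := by simp [smul_assoc r a v]

@[simp] lemma actL_apply (v : L) (a : A) : (actL v : A →ₗ[F] L) a = a • v := rfl

/-- `w ↦ b • w` as an `F`-linear map. -/
def actA (b : A) : L →ₗ[F] L where
  toFun w := b • w
  map_add' := smul_add b
  map_smul' r w := by simp [smul_comm r b w]

@[simp] lemma actA_apply (b : A) (w : L) : (actA b : L →ₗ[F] L) w = b • w := rfl

/-- `w ↦ b • ⁅x, w⁆` as an `F`-linear map. -/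
def actABr (b : A) (x : L) : L →ₗ[F] L where
  toFun w := b • ⁅x, w⁆
  map_add' w w' := by
    show b • ⁅x, w + w'⁆ = b • ⁅x, w⁆ + b • ⁅x, w'⁆
    rw [lie_add, smul_add]
  map_smul' r w := by
    show b • ⁅x, r • w⁆ = r • (b • ⁅x, w⁆)
    rw [lie_smul, smul_comm r b]

@[simp] lemma actABr_apply (b : A) (x w : L) : (actABr b x : L →ₗ[F] L) w = b • ⁅x, w⁆ := rfl

end Maps


namespace GradedLieRinehart

section Aux
variable {F : Type*} [Field F] {G : Type*} [CommGroup G] [DecidableEq G]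
  {A : Type*} [CommRing A] [Algebra F A]
  {L : Type*} [LieRing L] [LieAlgebra F L] [Module A L] [IsScalarTower F A L]
variable (𝔏 : GradedLieRinehart F G A L)

lemma main_symm : ∀ a ∈ 𝔏.Lpm ∪ 𝔏.Spm, a⁻¹ ∈ 𝔏.Lpm ∪ 𝔏.Spm := by
  intro a ha
  simp only [Lpm, Spm, Set.mem_union, Set.mem_setOf_eq, inv_inv] at ha ⊢
  tauto

lemma memA {k : G} (hk : k ∈ 𝔏.SuppA) : k ∈ 𝔏.Lpm ∪ 𝔏.Spm := Or.inl (Or.inl hk)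

lemma memL {k : G} (hk : k ∈ 𝔏.SuppL) : k ∈ 𝔏.Lpm ∪ 𝔏.Spm := Or.inr (Or.inl hk)

lemma memA_inv {e : G} (h : e ∈ 𝔏.SuppA) : e⁻¹ ∈ 𝔏.Lpm ∪ 𝔏.Spm :=
  Or.inl (Or.inr (by simpa using h))

lemma memL_inv {e : G} (h : e ∈ 𝔏.SuppL) : e⁻¹ ∈ 𝔏.Lpm ∪ 𝔏.Spm :=
  Or.inr (Or.inr (by simpa using h))

lemma suppA_of_mem {k : G} {b : A} (hb : b ∈ 𝔏.𝓐 k) (h0 : b ≠ 0) (h1 : k ≠ 1) :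
    k ∈ 𝔏.SuppA :=
  ⟨h1, fun hbot => h0 (by rw [hbot] at hb; simpa using hb)⟩

lemma suppL_of_mem {k : G} {w : L} (hw : w ∈ 𝔏.𝓛 k) (h0 : w ≠ 0) (h1 : k ≠ 1) :
    k ∈ 𝔏.SuppL :=
  ⟨h1, fun hbot => h0 (by rw [hbot] at hw; simpa using hw)⟩

lemma one_or_suppA {k : G} {b : A} (hb : b ∈ 𝔏.𝓐 k) (h0 : b ≠ 0) :
    k = 1 ∨ k ∈ 𝔏.SuppA := by
  by_cases h : k = 1
  exacts [Or.inl h, Or.inr (𝔏.suppA_of_mem hb h0 h)]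

lemma one_or_suppL {k : G} {w : L} (hw : w ∈ 𝔏.𝓛 k) (h0 : w ≠ 0) :
    k = 1 ∨ k ∈ 𝔏.SuppL := by
  by_cases h : k = 1
  exacts [Or.inl h, Or.inr (𝔏.suppL_of_mem hw h0 h)]

lemma sigma_refl {g : G} (hg : g ∈ 𝔏.SuppL) : 𝔏.SigmaConnected g g :=
  cc_single (Or.inl hg)

lemma lam_refl {k : G} (hk : k ∈ 𝔏.Lpm ∪ 𝔏.Spm) : 𝔏.LambdaConnected k k :=
  cc_single hk

lemma lam_of_sigma {g g' : G} (h : 𝔏.SigmaConnected g g') : 𝔏.LambdaConnected g g' :=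
  cc_mono (fun _ hx => Or.inr hx) (fun _ hx => hx.elim Or.inr Or.inl) h

lemma lam_to_g {g g' k : G} (hg : g ∈ 𝔏.SuppL) (hgl : g' ∈ 𝔏.SuppL)
    (hσ : 𝔏.SigmaConnected g g') (h : 𝔏.LambdaConnected k g') : 𝔏.LambdaConnected k g :=
  cc_trans 𝔏.main_symm (𝔏.memL hgl) h
    (cc_symm 𝔏.main_symm (𝔏.memL hg) (𝔏.memL hgl) (𝔏.lam_of_sigma hσ))

lemma conn_eq {k g' : G} (hk : k ∈ 𝔏.SuppA) (h : k = g') : 𝔏.LambdaConnected k g' := by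
  subst h
  exact cc_single (𝔏.memA hk)

lemma conn_eq_inv {k g' : G} (hk : k ∈ 𝔏.SuppA) (h : k = g'⁻¹) :
    𝔏.LambdaConnected k g' := by
  have h2 : g' = k⁻¹ := by rw [h, inv_inv]
  subst h2
  exact cc_inv_target (cc_single (𝔏.memA hk))

lemma conn_two_to {k g' : G} (hk : k ∈ 𝔏.SuppA) (hE : k⁻¹ * g' ∈ 𝔏.Lpm ∪ 𝔏.Spm) :
    𝔏.LambdaConnected k g' := by
  have h := cc_two (O := (∅ : Set G)) (𝔏.memA hk) hE
  rwa [mul_inv_cancel_left] at h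

lemma lam_conn_smul {k m : G} (hk : k ∈ 𝔏.SuppA) (hm : m ∈ 𝔏.Spm) {b : A} {v : L}
    (hb : b ∈ 𝔏.𝓐 k) (hv : v ∈ 𝔏.𝓛 m) (hne : b • v ≠ 0) : 𝔏.LambdaConnected k m := by
  by_cases hkm : k * m = 1
  · exact 𝔏.conn_eq_inv hk (by rw [eq_inv_of_mul_eq_one_right hkm, inv_inv])
  · have hkmS : k * m ∈ 𝔏.SuppL := 𝔏.suppL_of_mem (𝔏.smul_mem hb hv) hne hkm
    exact cc_three 𝔏.main_symm (𝔏.memA hk) (Or.inr hm) (𝔏.memL hkmS)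

lemma conn_P1 {k g' : G} (hk : k ∈ 𝔏.SuppA) (hgl : g' ∈ 𝔏.SuppL)
    (hc : k * g'⁻¹ = 1 ∨ k * g'⁻¹ ∈ 𝔏.SuppA) : 𝔏.LambdaConnected k g' := by
  rcases hc with h | h
  · exact 𝔏.conn_eq hk (by rwa [mul_inv_eq_one] at h)
  · exact cc_inv_target' (cc_three 𝔏.main_symm (𝔏.memA hk) (𝔏.memL_inv hgl) (𝔏.memA h))

lemma lemN {g k : G} (hg : g ∈ 𝔏.SuppL) (hk : k ∈ 𝔏.SuppA) {b : A} (hb : b ∈ 𝔏.𝓐 k)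
    {v : L} (hv : v ∈ 𝔏.Iclass g) (hne : b • v ≠ 0) : 𝔏.LambdaConnected k g := by
  have hφ : (actA b : L →ₗ[F] L) v ≠ 0 := by simpa using hne
  rcases sup_act (show v ∈ 𝔏.L1class g ⊔ 𝔏.Vclass g from hv) hφ with
    ⟨v1, hv1, hne1⟩ | ⟨v2, hv2, hne2⟩
  · rcases sup_act hv1 hne1 with ⟨s, hs, hnes⟩ | ⟨s, hs, hnes⟩
    · -- smul part of L1class
      obtain ⟨g', ⟨hg'L, hσ, hg'A⟩, s', hs', hnes'⟩ := biSup_act hs hnes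
      obtain ⟨u, ⟨a', ha', w, hw, rfl⟩, hneu⟩ := span_act hs' hnes'
      simp only [actA_apply] at hneu
      rw [smul_smul] at hneu
      have hba : b * a' ∈ 𝔏.𝓐 (k * g'⁻¹) := 𝔏.mul_mem hb ha'
      have hba0 : b * a' ≠ 0 := fun h => hneu (by rw [h, zero_smul])
      exact 𝔏.lam_to_g hg hg'L hσ (𝔏.conn_P1 hk hg'L (𝔏.one_or_suppA hba hba0))
    · -- bracket part of L1class
      obtain ⟨g', ⟨hg'L, hσ⟩, s', hs', hnes'⟩ := biSup_act hs hnes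
      obtain ⟨u, ⟨y, hy, w, hw, rfl⟩, hneu⟩ := span_act hs' hnes'
      simp only [actA_apply] at hneu
      refine 𝔏.lam_to_g hg hg'L hσ ?_
      by_cases hbw : b • w = 0
      · have hkey := 𝔏.leibniz y w b
        rw [hbw, lie_zero] at hkey
        have hne2 : (𝔏.ρ y) b • w ≠ 0 := by
          intro h0
          rw [h0, add_zero] at hkey
          exact hneu hkey.symm
        have hρ0 : (𝔏.ρ y) b ≠ 0 := fun h => hne2 (by rw [h, zero_smul])
        have hρm : (𝔏.ρ y) b ∈ 𝔏.𝓐 (g'⁻¹ * k) := 𝔏.rho_mem hy hb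
        rcases 𝔏.one_or_suppA hρm hρ0 with he | he
        · exact 𝔏.conn_eq hk ((inv_mul_eq_one.mp he).symm)
        · refine 𝔏.conn_two_to hk ?_
          rw [show k⁻¹ * g' = (g'⁻¹ * k)⁻¹ by rw [mul_inv, inv_inv, mul_comm]]
          exact 𝔏.memA_inv he
      · exact 𝔏.lam_conn_smul hk (Or.inl hg'L) hb hw hbw
  · -- Vclass
    obtain ⟨m, ⟨hmL, hσ⟩, u, hu, hneu⟩ := biSup_act hv2 hne2
    simp only [actA_apply] at hneu
    exact 𝔏.lam_to_g hg hmL hσ (𝔏.lam_conn_smul hk (Or.inl hmL) hb hu hneu)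

lemma lemR {g k : G} (hg : g ∈ 𝔏.SuppL) (hkA : k ∈ 𝔏.SuppA) {x : L} (hx : x ∈ 𝔏.𝓛 k⁻¹)
    {b : A} (hb : b ∈ 𝔏.𝓐 k) {v : L} (hv : v ∈ 𝔏.Iclass g) (hne : b • ⁅x, v⁆ ≠ 0) :
    𝔏.LambdaConnected k g := by
  have hφ : (actABr b x : L →ₗ[F] L) v ≠ 0 := by simpa using hne
  rcases sup_act (show v ∈ 𝔏.L1class g ⊔ 𝔏.Vclass g from hv) hφ with
    ⟨v1, hv1, hne1⟩ | ⟨v2, hv2, hne2⟩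
  · rcases sup_act hv1 hne1 with ⟨s, hs, hnes⟩ | ⟨s, hs, hnes⟩
    · -- smul generators
      obtain ⟨g', ⟨hg'L, hσ, hg'A⟩, s', hs', hnes'⟩ := biSup_act hs hnes
      obtain ⟨u, ⟨a', ha', w, hw, rfl⟩, hneu⟩ := span_act hs' hnes'
      simp only [actABr_apply] at hneu
      refine 𝔏.lam_to_g hg hg'L hσ ?_
      rw [𝔏.leibniz x w a', smul_add] at hneu
      by_cases h1 : b • (a' • ⁅x, w⁆) = 0
      · have h2 : b • ((𝔏.ρ x) a' • w) ≠ 0 := by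
          intro h2
          rw [h1, h2, add_zero] at hneu
          exact hneu rfl
        rw [smul_smul] at h2
        have hd0 : b * (𝔏.ρ x) a' ≠ 0 := fun h => h2 (by rw [h, zero_smul])
        have hρ0 : (𝔏.ρ x) a' ≠ 0 := fun h => hd0 (by rw [h, mul_zero])
        have hρm : (𝔏.ρ x) a' ∈ 𝔏.𝓐 (k⁻¹ * g'⁻¹) := 𝔏.rho_mem hx ha'
        rcases 𝔏.one_or_suppA hρm hρ0 with he | he
        · exact 𝔏.conn_eq_inv hkA (by rwa [inv_mul_eq_one] at he)
        · exact cc_inv_target' (𝔏.conn_two_to hkA (Or.inl (Or.inl he)))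
      · rw [smul_smul] at h1
        have hba : b * a' ∈ 𝔏.𝓐 (k * g'⁻¹) := 𝔏.mul_mem hb ha'
        have hba0 : b * a' ≠ 0 := fun h => h1 (by rw [h, zero_smul])
        exact 𝔏.conn_P1 hkA hg'L (𝔏.one_or_suppA hba hba0)
    · -- bracket generators
      obtain ⟨g', ⟨hg'L, hσ⟩, s', hs', hnes'⟩ := biSup_act hs hnes
      obtain ⟨u, ⟨y, hy, w, hw, rfl⟩, hneu⟩ := span_act hs' hnes'
      simp only [actABr_apply] at hneu
      refine 𝔏.lam_to_g hg hg'L hσ ?_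
      rw [leibniz_lie, smul_add] at hneu
      by_cases hA : b • ⁅⁅x, y⁆, w⁆ = 0
      · have hB : b • ⁅y, ⁅x, w⁆⁆ ≠ 0 := by
          intro h
          rw [hA, h, add_zero] at hneu
          exact hneu rfl
        by_cases hbu : b • ⁅x, w⁆ = 0
        · have hkey := 𝔏.leibniz y ⁅x, w⁆ b
          rw [hbu, lie_zero] at hkey
          have h2 : (𝔏.ρ y) b • ⁅x, w⁆ ≠ 0 := by
            intro h0
            rw [h0, add_zero] at hkey
            exact hB hkey.symm
          have hρ0 : (𝔏.ρ y) b ≠ 0 := fun h => h2 (by rw [h, zero_smul])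
          have hρm : (𝔏.ρ y) b ∈ 𝔏.𝓐 (g'⁻¹ * k) := 𝔏.rho_mem hy hb
          rcases 𝔏.one_or_suppA hρm hρ0 with he | he
          · exact 𝔏.conn_eq hkA ((inv_mul_eq_one.mp he).symm)
          · refine 𝔏.conn_two_to hkA ?_
            rw [show k⁻¹ * g' = (g'⁻¹ * k)⁻¹ by rw [mul_inv, inv_inv, mul_comm]]
            exact 𝔏.memA_inv he
        · have hu0 : ⁅x, w⁆ ≠ 0 := fun h => hbu (by rw [h, smul_zero])
          have hum : ⁅x, w⁆ ∈ 𝔏.𝓛 (k⁻¹ * g') := 𝔏.bracket_mem hx hw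
          rcases 𝔏.one_or_suppL hum hu0 with he | he
          · exact 𝔏.conn_eq hkA (by rwa [inv_mul_eq_one] at he)
          · exact 𝔏.conn_two_to hkA (Or.inr (Or.inl he))
      · by_cases hbw : b • w = 0
        · have hkey := 𝔏.leibniz ⁅x, y⁆ w b
          rw [hbw, lie_zero] at hkey
          have h2 : (𝔏.ρ ⁅x, y⁆) b • w ≠ 0 := by
            intro h0
            rw [h0, add_zero] at hkey
            exact hA hkey.symm
          have hz0 : ⁅x, y⁆ ≠ (0 : L) := by
            intro h0
            apply h2
            rw [h0, map_zero]
            simp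
          have hzm : ⁅x, y⁆ ∈ 𝔏.𝓛 (k⁻¹ * g'⁻¹) := 𝔏.bracket_mem hx hy
          rcases 𝔏.one_or_suppL hzm hz0 with he | he
          · exact 𝔏.conn_eq_inv hkA (by rwa [inv_mul_eq_one] at he)
          · exact cc_inv_target' (𝔏.conn_two_to hkA (Or.inr (Or.inl he)))
        · exact 𝔏.lam_conn_smul hkA (Or.inl hg'L) hb hw hbw
  · -- Vclass
    obtain ⟨m, ⟨hmL, hσ⟩, u, hu, hneu⟩ := biSup_act hv2 hne2
    simp only [actABr_apply] at hneu
    refine 𝔏.lam_to_g hg hmL hσ ?_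
    have hu0 : ⁅x, u⁆ ≠ 0 := fun h => hneu (by rw [h, smul_zero])
    have hum : ⁅x, u⁆ ∈ 𝔏.𝓛 (k⁻¹ * m) := 𝔏.bracket_mem hx hu
    rcases 𝔏.one_or_suppL hum hu0 with he | he
    · exact 𝔏.conn_eq hkA (by rwa [inv_mul_eq_one] at he)
    · exact 𝔏.conn_two_to hkA (Or.inr (Or.inl he))

lemma lemM {g k : G} (hg : g ∈ 𝔏.SuppL) (hk : k ∈ 𝔏.SuppA)
    (h : ∃ a ∈ 𝔏.calA k, ∃ v ∈ 𝔏.Iclass g, a • v ≠ 0) : 𝔏.LambdaConnected k g := by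
  obtain ⟨a, ha, v, hv, hne⟩ := h
  have hφ : (actL v : A →ₗ[F] L) a ≠ 0 := by simpa using hne
  rcases sup_act (show a ∈ 𝔏.A1class k ⊔ 𝔏.Aclass k from ha) hφ with
    ⟨a1, ha1, hne1⟩ | ⟨a2, ha2, hne2⟩
  · rcases sup_act ha1 hne1 with ⟨s, hs, hnes⟩ | ⟨s, hs, hnes⟩
    · -- rho part of A1class
      obtain ⟨k', ⟨hk'A, hlam, hk'L⟩, s', hs', hnes'⟩ := biSup_act hs hnes
      obtain ⟨u, ⟨x', hx', b, hbm, rfl⟩, hneu⟩ := span_act hs' hnes'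
      simp only [actL_apply] at hneu
      have htrans : 𝔏.LambdaConnected k' g → 𝔏.LambdaConnected k g := fun hc =>
        cc_trans 𝔏.main_symm (𝔏.memA hk'A) hlam hc
      by_cases hbv : b • v = 0
      · have hkey := 𝔏.leibniz x' v b
        rw [hbv, lie_zero] at hkey
        have hbxv : b • ⁅x', v⁆ ≠ 0 := by
          intro h0
          rw [h0, zero_add] at hkey
          exact hneu hkey.symm
        exact htrans (𝔏.lemR hg hk'A hx' hbm hv hbxv)
      · exact htrans (𝔏.lemN hg hk'A hbm hv hbv)
    · -- mul part of A1class
      obtain ⟨k', ⟨hk'A, hlam⟩, s', hs', hnes'⟩ := biSup_act hs hnes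
      obtain ⟨u, ⟨b, hbm, c, hcm, rfl⟩, hneu⟩ := span_act hs' hnes'
      simp only [actL_apply] at hneu
      rw [mul_smul] at hneu
      have hcv : c • v ≠ 0 := fun h => hneu (by rw [h, smul_zero])
      exact cc_trans 𝔏.main_symm (𝔏.memA hk'A) hlam (𝔏.lemN hg hk'A hcm hv hcv)
  · -- Aclass
    obtain ⟨k', ⟨hk'A, hlam⟩, b, hbm, hneb⟩ := biSup_act ha2 hne2
    simp only [actL_apply] at hneb
    exact cc_trans 𝔏.main_symm (𝔏.memA hk'A) hlam (𝔏.lemN hg hk'A hbm hv hneb)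

end Aux

end GradedLieRinehart

/-- For a tight graded Lie-Rinehart algebra, each class `[g] ∈ Σ_G/∼` has a unique class
`[h] ∈ Λ_G/≈` with `𝒜_{[h]} I_{[g]} ≠ 0`. -/
theorem tight_unique_action (𝔏 : GradedLieRinehart F G A L) (ht : 𝔏.Tight) :
    ∀ g ∈ 𝔏.SuppL, ∃ h ∈ 𝔏.SuppA,
      (∃ a ∈ 𝔏.calA h, ∃ v ∈ 𝔏.Iclass g, a • v ≠ 0) ∧
      (∀ h' ∈ 𝔏.SuppA, (∃ a ∈ 𝔏.calA h', ∃ v ∈ 𝔏.Iclass g, a • v ≠ 0) →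
        𝔏.LambdaConnected h h') := by
  intro g hg
  obtain ⟨v, hvm, hv0⟩ := (Submodule.ne_bot_iff _).1 hg.2
  have hvI : v ∈ 𝔏.Iclass g := by
    apply Submodule.mem_sup_right
    exact Submodule.mem_iSup_of_mem g
      (Submodule.mem_iSup_of_mem ⟨hg, 𝔏.sigma_refl hg⟩ hvm)
  obtain ⟨a, hav⟩ : ∃ a : A, a • v ≠ 0 := by
    by_contra hc
    push_neg at hc
    exact hv0 (ht.2.1 v hc)
  have haT : a ∈ ⨆ i, 𝔏.𝓐 i := by
    rw [𝔏.internalA.submodule_iSup_eq_top]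
    trivial
  obtain ⟨i, b, hbm, hbv⟩ := iSup_act haT (show (actL v : A →ₗ[F] L) a ≠ 0 by simpa using hav)
  simp only [actL_apply] at hbv
  have hmain : ∃ h ∈ 𝔏.SuppA, ∃ s ∈ 𝔏.calA h, s • v ≠ 0 := by
    by_cases hi1 : i = 1
    · subst hi1
      rw [ht.2.2.2.2.2.2] at hbm
      rcases sup_act hbm (show (actL v : A →ₗ[F] L) b ≠ 0 by simpa using hbv) with
        ⟨s, hs, hnes⟩ | ⟨s, hs, hnes⟩
      · obtain ⟨h, ⟨hhA, hhL⟩, s', hs', hnes'⟩ := biSup_act hs hnes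
        refine ⟨h, hhA, s', ?_, by simpa using hnes'⟩
        apply Submodule.mem_sup_left
        apply Submodule.mem_sup_left
        exact Submodule.mem_iSup_of_mem h
          (Submodule.mem_iSup_of_mem ⟨hhA, 𝔏.lam_refl (𝔏.memA hhA), hhL⟩ hs')
      · obtain ⟨h, hhA, s', hs', hnes'⟩ := biSup_act hs hnes
        refine ⟨h, hhA, s', ?_, by simpa using hnes'⟩
        apply Submodule.mem_sup_left
        apply Submodule.mem_sup_right
        exact Submodule.mem_iSup_of_mem h
          (Submodule.mem_iSup_of_mem ⟨hhA, 𝔏.lam_refl (𝔏.memA hhA)⟩ hs')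
    · have hiA : i ∈ 𝔏.SuppA :=
        𝔏.suppA_of_mem hbm (fun h => hbv (by rw [h, zero_smul])) hi1
      refine ⟨i, hiA, b, ?_, hbv⟩
      apply Submodule.mem_sup_right
      exact Submodule.mem_iSup_of_mem i
        (Submodule.mem_iSup_of_mem ⟨hiA, 𝔏.lam_refl (𝔏.memA hiA)⟩ hbm)
  obtain ⟨h, hhA, s, hsm, hsv⟩ := hmain
  have hW : ∃ a ∈ 𝔏.calA h, ∃ v' ∈ 𝔏.Iclass g, a • v' ≠ 0 := ⟨s, hsm, v, hvI, hsv⟩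
  refine ⟨h, hhA, hW, ?_⟩
  intro h' hh' hW'
  have c1 : 𝔏.LambdaConnected h g := 𝔏.lemM hg hhA hW
  have c2 : 𝔏.LambdaConnected h' g := 𝔏.lemM hg hh' hW'
  exact cc_trans 𝔏.main_symm (𝔏.memL hg) c1
    (cc_symm 𝔏.main_symm (𝔏.memA hh') (𝔏.memL hg) c2)
end

section
/- Let (L,A) be a tight G-graded Lie-Rinehart algebra of maximal length that is G-multiplicative. If I is a nonzero graded ideal of L, then I is not contained in the identity component L_1. -/
open Submodule

open GradedLieRinehart

variable {F : Type*} [Field F] {G : Type*} [CommGroup G] [DecidableEq G]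
  {A : Type*} [CommRing A] [Algebra F A]
  {L : Type*} [LieRing L] [LieAlgebra F L] [Module A L] [IsScalarTower F A L]

/-- For a tight, maximal length, `G`-multiplicative graded Lie-Rinehart algebra,
no nonzero graded ideal of `L` is contained in `L_1`. -/
theorem graded_ideal_not_in_L1 (𝔏 : GradedLieRinehart F G A L)
    (ht : 𝔏.Tight) (hml : 𝔏.MaximalLength) (hmu : 𝔏.GMultiplicative) :
    ∀ I : Submodule F L, 𝔏.IsGradedIdealL I → I ≠ ⊥ → ¬ I ≤ 𝔏.𝓛 1 := by
  intro I hI hIne hI1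
  obtain ⟨v, hvI, hv0⟩ : ∃ v ∈ I, v ≠ 0 := by
    by_contra h
    push_neg at h
    exact hIne (le_bot_iff.mp fun v hv => h v hv)
  have hv1 : v ∈ 𝔏.𝓛 1 := hI1 hvI
  -- elements of I in a nonidentity component are zero
  have hdis : ∀ h : G, h ≠ 1 → ∀ x : L, x ∈ 𝔏.𝓛 1 → x ∈ 𝔏.𝓛 h → x = 0 := by
    intro h hne x h1 hh
    have hd : Disjoint (𝔏.𝓛 1) (𝔏.𝓛 h) :=
      𝔏.internalL.submodule_iSupIndep.pairwiseDisjoint (Ne.symm hne)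
    exact (Submodule.disjoint_def.mp hd) x h1 hh
  have hsz : ∀ k : G, k ≠ 1 → ∀ a ∈ 𝔏.𝓐 k, a • v = 0 := by
    intro k hk a ha
    have h1 : a • v ∈ I := hI.1.2.1 a v hvI
    have h2 : a • v ∈ 𝔏.𝓛 k := by
      have := 𝔏.smul_mem ha hv1
      rwa [mul_one] at this
    exact hdis k hk _ (hI1 h1) h2
  have hbz : ∀ h : G, h ≠ 1 → ∀ x ∈ 𝔏.𝓛 h, ⁅x, v⁆ = 0 := by
    intro h hh x hx
    have h1 : ⁅x, v⁆ ∈ I := hI.1.1 x v hvI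
    have h2 : ⁅x, v⁆ ∈ 𝔏.𝓛 h := by
      have := 𝔏.bracket_mem hx hv1
      rwa [mul_one] at this
    exact hdis h hh _ (hI1 h1) h2
  -- the F-linear map a ↦ a • v
  set φ : A →ₗ[F] L := (LinearMap.toSpanSingleton A L v).restrictScalars F with hφ
  have hker1 : 𝔏.𝓐 1 ≤ LinearMap.ker φ := by
    rw [ht.2.2.2.2.2.2]
    unfold GradedLieRinehart.A1full
    apply sup_le
    · apply iSup_le; intro g; apply iSup_le; intro hg
      rw [GradedLieRinehart.rhoSub, Submodule.span_le]
      rintro x ⟨u, hu, c, hc, rfl⟩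
      simp only [SetLike.mem_coe, LinearMap.mem_ker]
      show (𝔏.ρ u c) • v = 0
      have hg1 : g ≠ 1 := hg.1.1
      have h1 : c • v = 0 := hsz g hg1 c hc
      have h2 : ⁅u, v⁆ = 0 := hbz g⁻¹ (by simp [hg1]) u hu
      have h3 := 𝔏.leibniz u v c
      rw [h1, h2] at h3
      simpa using h3.symm
    · apply iSup_le; intro g; apply iSup_le; intro hg
      rw [GradedLieRinehart.mulSub, Submodule.span_le]
      rintro x ⟨b, hb, c, hc, rfl⟩
      simp only [SetLike.mem_coe, LinearMap.mem_ker]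
      show (b * c) • v = 0
      rw [mul_smul, hsz g hg.1 c hc, smul_zero]
  have htop : (⊤ : Submodule F A) ≤ LinearMap.ker φ := by
    rw [← 𝔏.internalA.submodule_iSup_eq_top]
    apply iSup_le
    intro k
    by_cases hk : k = 1
    · subst hk; exact hker1
    · intro a ha
      simp only [LinearMap.mem_ker]
      exact hsz k hk a ha
  exact hv0 (ht.2.1 v fun a => LinearMap.mem_ker.mp (htop Submodule.mem_top))
end
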